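/- arXiv:1304.5763 — 2 statements merged into one kernel-verified Lean document; each statement's English description precedes it below -/
import Mathlib

section
/- Let r ≥ 2 be a natural number, q = 2r − 1, and let μₙ ∈ ℂ[F_r] be μₙ = (1/((q+1)q^{n−1})) ∑_{|x|=n} x for n ≥ 1, with μ₀ the identity. For a function φ: F_r → ℂ and a finitely supported function ψ ∈ ℂ[F_r] write ⟨ψ, φ⟩ = ∑_{x ∈ F_r} ψ(x)φ(x). Let φ: F_r → ℂ be a radial function, not identically zero. Then the following are equivalent: (1) φ(e) = 1 and there exists s ∈ ℂ such that φ̇(1) = s and φ̇(n+1) = ((q+1)/q)·s·φ̇(n) − (1/q)·φ̇(n−1) for all n ≥ 1 (i.e. φ is spherical); (2) ⟨μ_m * μ_n, φ⟩ = ⟨μ_m, φ⟩·⟨μ_n, φ⟩ for all m, n ∈ ℕ (i.e. the functional ψ ↦ ⟨ψ, φ⟩ is multiplicative on the algebra spanned by the μₙ). -/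
/-!
Let `σ` be the sum of the `2r` letters in `ℂ[F_r]`, so that `μ 1 = σ / (q + 1)`. For a word
`x ≠ 1` exactly one letter `l` shortens `l * x`, and every other letter lengthens it. On
coefficients this gives `σ * μ n = q • μ (n + 1) + μ (n - 1)` for `n ≥ 1`; on a radial function
with profile `f` it says that the sum of `f` over the neighbours `l * x` of `x ≠ 1` is
`f (|x| - 1) + q * f (|x| + 1)`, which is `(q + 1) * f 1 * f |x|` when `f` is spherical. So for
spherical `f`, pairing against `σ * ψ` multiplies by `(q + 1) * f 1`, and induction along the
recurrence gives `⟨μ n * ψ, f⟩ = f n * ⟨ψ, f⟩`. For the spherical constant `1` this says that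
each `μ n` has mass `1`, whence `⟨μ n, f⟩ = f n` for every radial `f`. Conversely,
multiplicativity at `(0, n)` forces `f 0 = 1` (as `f ≠ 0`), and at `(1, n)` it is the recurrence.
-/

noncomputable section

/-- Word length of an element of a free group. -/
def wordLength {α : Type*} [DecidableEq α] (x : FreeGroup α) : ℕ :=
  x.toWord.length

/-- The pairing `⟨ψ, φ⟩ = ∑_{x} ψ(x)·φ(x)` between a finitely supported
function `ψ` (an element of the group algebra) and an arbitrary function `φ`. -/
def pairing {r : ℕ} (ψ : MonoidAlgebra ℂ (FreeGroup (Fin r)))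
    (φ : FreeGroup (Fin r) → ℂ) : ℂ :=
  Finsupp.sum ψ.coeff fun x c => c * φ x

namespace FreeGroup

variable {α : Type*}

section Letters

variable [Fintype α]

lemma sum_mk_singleton_inv {M : Type*} [AddCommMonoid M] (F : FreeGroup α → M) :
    ∑ l : α × Bool, F (mk [l])⁻¹ = ∑ l : α × Bool, F (mk [l]) :=
  Fintype.sum_equiv (Equiv.prodCongrRight fun _ => Equiv.boolNot) _ _ fun l => by
    simp [inv_mk, invRev, Equiv.prodCongrRight]

def neighbourSum (f : FreeGroup α → ℂ) (x : FreeGroup α) : ℂ :=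
  ∑ l : α × Bool, f (mk [l] * x)

variable (α) in
def letterSum : MonoidAlgebra ℂ (FreeGroup α) :=
  ∑ l : α × Bool, MonoidAlgebra.single (mk [l]) 1

lemma coeff_letterSum_mul (ψ : MonoidAlgebra ℂ (FreeGroup α)) (x : FreeGroup α) :
    (letterSum α * ψ).coeff x = neighbourSum ψ.coeff x := by
  simp only [letterSum, Finset.sum_mul, MonoidAlgebra.coeff_sum, Finsupp.finsetSum_apply,
    MonoidAlgebra.coeff_single_mul_apply, one_mul, neighbourSum]
  exact sum_mk_singleton_inv fun g => ψ.coeff (g * x)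

end Letters

variable [DecidableEq α]

@[simp]
lemma wordLength_one : wordLength (1 : FreeGroup α) = 0 := rfl

lemma wordLength_eq_zero_iff {x : FreeGroup α} : wordLength x = 0 ↔ x = 1 := by
  simp [wordLength, toWord_eq_nil_iff]

@[simp]
lemma wordLength_mk_singleton (l : α × Bool) : wordLength (mk [l]) = 1 := by
  simp [wordLength, toWord_mk]

lemma mk_singleton_injective : Function.Injective fun l : α × Bool => mk [l] := by
  intro l l' h
  simpa [toWord_mk] using congrArg toWord h

lemma wordLength_eq_one_iff {x : FreeGroup α} : wordLength x = 1 ↔ ∃ l, mk [l] = x := by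
  refine ⟨fun h => ?_, fun ⟨l, hl⟩ => hl ▸ wordLength_mk_singleton l⟩
  obtain ⟨l, hl⟩ := List.length_eq_one_iff.mp h
  exact ⟨l, by rw [← hl, mk_toWord]⟩

lemma exists_wordLength_mk_singleton_mul {x : FreeGroup α} (hx : x ≠ 1) :
    ∃ b, ∀ l, wordLength (mk [l] * x) =
      if l = b then wordLength x - 1 else wordLength x + 1 := by
  obtain ⟨c, w, hw⟩ := List.exists_cons_of_ne_nil (mt toWord_eq_nil_iff.mp hx)
  refine ⟨(c.1, !c.2), fun l => ?_⟩
  have hl : (l.1 = c.1 ∧ l.2 = !c.2) ↔ l = (c.1, !c.2) := by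
    obtain ⟨a, b⟩ := l; simp
  rw [wordLength, wordLength, toWord_mul, toWord_mk, reduce_singleton, List.singleton_append,
    reduce.cons, reduce_toWord, hw]
  simp only [hl]
  split_ifs <;> simp

variable [Fintype α]

lemma neighbourSum_comp_wordLength (g : ℕ → ℂ) (x : FreeGroup α) :
    neighbourSum (g ∘ wordLength) x = if x = 1 then 2 * Fintype.card α * g 1 else
      g (wordLength x - 1) + (2 * Fintype.card α - 1) * g (wordLength x + 1) := by
  split_ifs with hx
  · simp [neighbourSum, hx, mul_comm]
  obtain ⟨b, hb⟩ := exists_wordLength_mk_singleton_mul hx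
  have hterm : ∀ l, g (wordLength (mk [l] * x)) =
      (if l = b then g (wordLength x - 1) - g (wordLength x + 1) else 0) +
        g (wordLength x + 1) := by
    intro l
    rw [hb]
    split_ifs <;> ring
  simp only [neighbourSum, Function.comp_apply, hterm, Finset.sum_add_distrib, Finset.sum_ite_eq',
    Finset.mem_univ, if_true, Finset.sum_const, Finset.card_univ, Fintype.card_prod,
    Fintype.card_bool, nsmul_eq_mul]
  push_cast
  ring

lemma coeff_letterSum (x : FreeGroup α) :
    (letterSum α).coeff x = if wordLength x = 1 then 1 else 0 := by
  simp only [letterSum, MonoidAlgebra.coeff_sum, MonoidAlgebra.coeff_single,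
    Finsupp.finsetSum_apply, Finsupp.single_apply]
  split_ifs with hx
  · obtain ⟨l, rfl⟩ := wordLength_eq_one_iff.mp hx
    simp [mk_singleton_injective.eq_iff]
  · exact Finset.sum_eq_zero fun l _ => if_neg fun h => hx (wordLength_eq_one_iff.mpr ⟨l, h⟩)

end FreeGroup

open FreeGroup MonoidAlgebra

section Pairing

variable {r : ℕ}

lemma pairing_eq_linearCombination (ψ : MonoidAlgebra ℂ (FreeGroup (Fin r)))
    (φ : FreeGroup (Fin r) → ℂ) : pairing ψ φ = Finsupp.linearCombination ℂ φ ψ.coeff := by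
  simp [pairing, Finsupp.linearCombination_apply]

lemma pairing_add (ψ χ : MonoidAlgebra ℂ (FreeGroup (Fin r))) (φ : FreeGroup (Fin r) → ℂ) :
    pairing (ψ + χ) φ = pairing ψ φ + pairing χ φ := by
  simp [pairing_eq_linearCombination, coeff_add]

lemma pairing_smul (c : ℂ) (ψ : MonoidAlgebra ℂ (FreeGroup (Fin r))) (φ : FreeGroup (Fin r) → ℂ) :
    pairing (c • ψ) φ = c * pairing ψ φ := by
  simp [pairing_eq_linearCombination, coeff_smul]

lemma pairing_sum {ι : Type*} (s : Finset ι) (ψ : ι → MonoidAlgebra ℂ (FreeGroup (Fin r)))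
    (φ : FreeGroup (Fin r) → ℂ) : pairing (∑ i ∈ s, ψ i) φ = ∑ i ∈ s, pairing (ψ i) φ := by
  simp [pairing_eq_linearCombination, coeff_sum]

@[simp]
lemma pairing_single (g : FreeGroup (Fin r)) (c : ℂ) (φ : FreeGroup (Fin r) → ℂ) :
    pairing (single g c) φ = c * φ g := by
  simp [pairing_eq_linearCombination, coeff_single]

@[simp]
lemma pairing_one (φ : FreeGroup (Fin r) → ℂ) : pairing 1 φ = φ 1 := by
  simp [one_def]

lemma pairing_const_mul (ψ : MonoidAlgebra ℂ (FreeGroup (Fin r))) (c : ℂ)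
    (φ : FreeGroup (Fin r) → ℂ) : pairing ψ (fun x => c * φ x) = c * pairing ψ φ := by
  simp only [pairing, Finsupp.mul_sum, mul_left_comm]

lemma pairing_congr {ψ : MonoidAlgebra ℂ (FreeGroup (Fin r))} {φ φ' : FreeGroup (Fin r) → ℂ}
    (h : ∀ x ∈ ψ.coeff.support, φ x = φ' x) : pairing ψ φ = pairing ψ φ' :=
  Finsupp.sum_congr fun x hx => by rw [h x hx]

lemma pairing_letterSum_mul (ψ : MonoidAlgebra ℂ (FreeGroup (Fin r))) (φ : FreeGroup (Fin r) → ℂ) :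
    pairing (letterSum (Fin r) * ψ) φ = pairing ψ (neighbourSum φ) := by
  induction ψ using MonoidAlgebra.induction_linear with
  | zero => simp [pairing]
  | add ψ χ hψ hχ => rw [mul_add, pairing_add, pairing_add, hψ, hχ]
  | single g c =>
    simp [letterSum, Finset.sum_mul, single_mul_single, pairing_sum, neighbourSum, Finset.mul_sum]

end Pairing

lemma two_mul_natCast_sub_one_ne_zero (c : ℕ) : 2 * (c : ℂ) - 1 ≠ 0 := by
  intro h
  have h2 : 2 * c = 1 := by exact_mod_cast (by linear_combination h : 2 * (c : ℂ) = 1)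
  omega

-- `sphereWeight q n = 1 / #{x | wordLength x = n}` when `q = 2r - 1`.
def sphereWeight (q : ℂ) : ℕ → ℂ
  | 0 => 1
  | n + 1 => 1 / ((q + 1) * q ^ n)

lemma mul_sphereWeight_succ {q : ℂ} (hq : q ≠ 0) {n : ℕ} (hn : n ≠ 0) :
    q * sphereWeight q (n + 1) = sphereWeight q n := by
  obtain ⟨n, rfl⟩ := Nat.exists_eq_succ_of_ne_zero hn
  simp only [sphereWeight, pow_succ]
  field_simp

def IsSphereAverage {α : Type*} [DecidableEq α] (q : ℂ) (μ : ℕ → MonoidAlgebra ℂ (FreeGroup α)) :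
    Prop :=
  ∀ n x, (μ n).coeff x = if wordLength x = n then sphereWeight q n else 0

namespace IsSphereAverage

variable {α : Type*} [DecidableEq α] {q : ℂ} {μ : ℕ → MonoidAlgebra ℂ (FreeGroup α)}

lemma of_one_of_coeff (hμ0 : μ 0 = 1) (hμ : ∀ n : ℕ, 1 ≤ n → ∀ x : FreeGroup α,
      (μ n).coeff x = if wordLength x = n then 1 / ((q + 1) * q ^ (n - 1)) else 0) :
    IsSphereAverage q μ
  | 0, x => by
    simp [hμ0, one_def, coeff_single, Finsupp.single_apply, wordLength_eq_zero_iff, eq_comm,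
      sphereWeight]
  | n + 1, x => hμ (n + 1) n.succ_pos x

lemma zero_eq (hμ : IsSphereAverage q μ) : μ 0 = 1 := by
  ext x
  simp [hμ 0 x, one_def, coeff_single, Finsupp.single_apply, wordLength_eq_zero_iff, eq_comm,
    sphereWeight]

variable [Fintype α]

lemma one_eq (hμ : IsSphereAverage q μ) : μ 1 = (q + 1)⁻¹ • letterSum α := by
  ext x
  simp [hμ 1 x, coeff_smul, coeff_letterSum, sphereWeight]

lemma letterSum_mul [Nonempty α] (hμ : IsSphereAverage q μ) (hq : q = 2 * Fintype.card α - 1)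
    {n : ℕ} (hn : 1 ≤ n) : letterSum α * μ n = q • μ (n + 1) + μ (n - 1) := by
  have hq0 : q ≠ 0 := hq ▸ two_mul_natCast_sub_one_ne_zero _
  have hq1 : 2 * (Fintype.card α : ℂ) = q + 1 := by rw [hq]; ring
  have hq10 : q + 1 ≠ 0 := by rw [← hq1]; exact_mod_cast (by positivity : 2 * Fintype.card α ≠ 0)
  have hcoeff : ⇑(μ n).coeff = (fun k => if k = n then sphereWeight q n else 0) ∘ wordLength :=
    funext (hμ n)
  ext x
  rw [coeff_letterSum_mul, hcoeff, neighbourSum_comp_wordLength, coeff_add, coeff_smul,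
    Finsupp.add_apply, Finsupp.smul_apply, hμ, hμ, smul_eq_mul, hq1, add_sub_cancel_right]
  rcases eq_or_ne x 1 with rfl | hx
  · rcases eq_or_ne n 1 with rfl | hn1
    · simp [sphereWeight, hq10]
    · simp [Ne.symm hn1, show 0 ≠ n - 1 by omega]
  · have hx0 : wordLength x ≠ 0 := mt wordLength_eq_zero_iff.mp hx
    rw [if_neg hx]
    split_ifs <;> try omega
    · rw [mul_sphereWeight_succ hq0 (by omega)]; ring
    · rw [← mul_sphereWeight_succ hq0 (n := n - 1) (by omega), Nat.sub_add_cancel hn]; ring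
    · ring

end IsSphereAverage

-- The spherical recurrence multiplied through by `q`.
def IsSphericalProfile (q : ℂ) (f : ℕ → ℂ) : Prop :=
  f 0 = 1 ∧ ∀ n, 1 ≤ n → q * f (n + 1) + f (n - 1) = (q + 1) * f 1 * f n

namespace IsSphericalProfile

lemma const_one (q : ℂ) : IsSphericalProfile q 1 :=
  ⟨rfl, fun _ _ => by simp⟩

lemma iff_recurrence {q : ℂ} (hq : q ≠ 0) {f : ℕ → ℂ} :
    IsSphericalProfile q f ↔ f 0 = 1 ∧ ∃ s, f 1 = s ∧ ∀ n, 1 ≤ n →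
      f (n + 1) = (q + 1) / q * s * f n - 1 / q * f (n - 1) := by
  refine and_congr_right fun _ => ⟨fun h => ⟨f 1, rfl, fun n hn => ?_⟩, ?_⟩
  · field_simp
    linear_combination h n hn
  · rintro ⟨s, rfl, h⟩ n hn
    rw [h n hn]
    field_simp
    ring

lemma neighbourSum_comp_wordLength {α : Type*} [DecidableEq α] [Fintype α] {f : ℕ → ℂ}
    (hf : IsSphericalProfile (2 * Fintype.card α - 1) f) (x : FreeGroup α) :
    neighbourSum (f ∘ wordLength) x = 2 * Fintype.card α * f 1 * f (wordLength x) := by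
  rw [FreeGroup.neighbourSum_comp_wordLength]
  split_ifs with hx
  · rw [hx, wordLength_one, hf.1, mul_one]
  · have hx0 : 1 ≤ wordLength x :=
      Nat.one_le_iff_ne_zero.mpr (mt wordLength_eq_zero_iff.mp hx)
    linear_combination hf.2 _ hx0

lemma pairing_letterSum_mul {r : ℕ} {q : ℂ} (hq : q = 2 * r - 1) {f : ℕ → ℂ}
    (hf : IsSphericalProfile q f) (ψ : MonoidAlgebra ℂ (FreeGroup (Fin r))) :
    pairing (letterSum (Fin r) * ψ) (f ∘ wordLength) =
      (q + 1) * f 1 * pairing ψ (f ∘ wordLength) := by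
  have hq' : q = 2 * Fintype.card (Fin r) - 1 := by simpa using hq
  rw [_root_.pairing_letterSum_mul, ← pairing_const_mul]
  congr 1
  funext x
  rw [(hq' ▸ hf : IsSphericalProfile _ f).neighbourSum_comp_wordLength, hq]
  simp

end IsSphericalProfile

namespace IsSphereAverage

variable {r : ℕ} [NeZero r] {q : ℂ} {μ : ℕ → MonoidAlgebra ℂ (FreeGroup (Fin r))}

lemma pairing_mul_of_isSphericalProfile (hμ : IsSphereAverage q μ) (hq : q = 2 * r - 1)
    {f : ℕ → ℂ} (hf : IsSphericalProfile q f) (ψ : MonoidAlgebra ℂ (FreeGroup (Fin r))) (n : ℕ) :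
    pairing (μ n * ψ) (f ∘ wordLength) = f n * pairing ψ (f ∘ wordLength) := by
  have hq0 : q ≠ 0 := hq ▸ two_mul_natCast_sub_one_ne_zero r
  have hq10 : q + 1 ≠ 0 := by rw [hq, sub_add_cancel]; exact mul_ne_zero two_ne_zero (NeZero.ne _)
  have hq' : q = 2 * Fintype.card (Fin r) - 1 := by simpa using hq
  induction n using Nat.twoStepInduction with
  | zero => rw [hμ.zero_eq, one_mul, hf.1, one_mul]
  | one =>
    rw [hμ.one_eq, smul_mul_assoc, pairing_smul, hf.pairing_letterSum_mul hq]
    field_simp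
  | more n ih0 ih1 =>
    show pairing (μ (n + 1 + 1) * ψ) _ = f (n + 1 + 1) * _
    have h := congrArg (fun a => pairing (a * ψ) (f ∘ wordLength))
      (hμ.letterSum_mul hq' (n := n + 1) (by omega))
    have hrec := hf.2 (n + 1) (by omega)
    simp only [add_mul, pairing_add, smul_mul_assoc, pairing_smul, mul_assoc,
      hf.pairing_letterSum_mul hq, ih1, Nat.add_sub_cancel, ih0] at h hrec
    apply mul_left_cancel₀ hq0
    linear_combination -h - hrec * pairing ψ (f ∘ wordLength)

lemma pairing_comp_wordLength (hμ : IsSphereAverage q μ) (hq : q = 2 * r - 1) (f : ℕ → ℂ)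
    (n : ℕ) : pairing (μ n) (f ∘ wordLength) = f n := by
  have hμ1 : pairing (μ n) (fun _ => 1) = 1 := by
    have h := hμ.pairing_mul_of_isSphericalProfile hq (.const_one q) 1 n
    rwa [mul_one, pairing_one, Function.comp_apply, Pi.one_apply, one_mul] at h
  calc pairing (μ n) (f ∘ wordLength) = pairing (μ n) (fun _ => f n * 1) := by
        refine pairing_congr fun x hx => ?_
        by_cases h : wordLength x = n
        · simp [h]
        · simp [hμ n x, h] at hx
    _ = f n := by rw [pairing_const_mul, hμ1, mul_one]

lemma isSphericalProfile_of_pairing_mul (hμ : IsSphereAverage q μ) (hq : q = 2 * r - 1)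
    {f : ℕ → ℂ} (hf : f ≠ 0)
    (H : ∀ m n, pairing (μ m * μ n) (f ∘ wordLength) =
      pairing (μ m) (f ∘ wordLength) * pairing (μ n) (f ∘ wordLength)) :
    IsSphericalProfile q f := by
  simp only [hμ.pairing_comp_wordLength hq] at H
  have hf0 : f 0 = 1 := by
    have h0 : ∀ n, f n = f 0 * f n := fun n => by
      simpa [hμ.zero_eq, hμ.pairing_comp_wordLength hq] using H 0 n
    by_contra h1
    have : f 0 = 0 := by
      simpa [sub_eq_zero, h1] using (by linear_combination -h0 0 : f 0 * (f 0 - 1) = 0)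
    exact hf (funext fun n => by rw [h0 n, this, zero_mul, Pi.zero_apply])
  refine ⟨hf0, fun n hn => ?_⟩
  have hq10 : q + 1 ≠ 0 := by rw [hq, sub_add_cancel]; exact mul_ne_zero two_ne_zero (NeZero.ne _)
  have h := H 1 n
  rw [hμ.one_eq, smul_mul_assoc, hμ.letterSum_mul (by simpa using hq) hn, pairing_smul,
    pairing_add, pairing_smul, hμ.pairing_comp_wordLength hq, hμ.pairing_comp_wordLength hq] at h
  field_simp at h
  linear_combination h

end IsSphereAverage

theorem spherical_iff_multiplicative (r : ℕ) (hr : 2 ≤ r) (q : ℂ) (hq : q = 2 * r - 1)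
    (μ : ℕ → MonoidAlgebra ℂ (FreeGroup (Fin r)))
    (hμ0 : μ 0 = 1)
    (hμ : ∀ n : ℕ, 1 ≤ n → ∀ x : FreeGroup (Fin r),
      (μ n).coeff x = if wordLength x = n then 1 / ((q + 1) * q ^ (n - 1)) else 0)
    (φ : FreeGroup (Fin r) → ℂ) (φd : ℕ → ℂ)
    (hrad : ∀ x : FreeGroup (Fin r), φ x = φd (wordLength x))
    (hne : φ ≠ 0) :
    ((φ 1 = 1 ∧ ∃ s : ℂ, φd 1 = s ∧ ∀ n : ℕ, 1 ≤ n →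
        φd (n + 1) = ((q + 1) / q) * s * φd n - (1 / q) * φd (n - 1)) ↔
      ∀ m n : ℕ, pairing (μ m * μ n) φ = pairing (μ m) φ * pairing (μ n) φ) := by
  have : NeZero r := ⟨by omega⟩
  have hμ' : IsSphereAverage q μ := .of_one_of_coeff hμ0 hμ
  obtain rfl : φ = φd ∘ wordLength := funext hrad
  rw [Function.comp_apply, wordLength_one,
    ← IsSphericalProfile.iff_recurrence (hq ▸ two_mul_natCast_sub_one_ne_zero r)]
  refine ⟨fun hφ m n => ?_, hμ'.isSphericalProfile_of_pairing_mul hq fun h => hne (by simp [h])⟩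
  rw [hμ'.pairing_mul_of_isSphericalProfile hq hφ, hμ'.pairing_comp_wordLength hq,
    hμ'.pairing_comp_wordLength hq]
end
end

section
/- Let q ≥ 3 be an odd integer and let Pₙ be the polynomials defined by P₀(x) = 1, P₁(x) = x, P_{n+1}(x) = ((q+1)/q)·x·Pₙ(x) − (1/q)·P_{n−1}(x). Then for every n ∈ ℕ, the derivative of Pₙ at 1 equals P'ₙ(1) = n·(q+1)/(q−1) − 2q(1 − q^{−n})/(q−1)². -/
noncomputable section

/-- The spherical polynomials `Pₙ` for the parameter `q`:
`P₀ = 1`, `P₁ = X`, `P_{n+2}(x) = ((q+1)/q)·x·P_{n+1}(x) − (1/q)·Pₙ(x)`. -/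
def P (q : ℝ) : ℕ → ℝ → ℝ
  | 0 => fun _ => 1
  | 1 => fun s => s
  | (n + 2) => fun s => ((q + 1) / q) * s * P q (n + 1) s - (1 / q) * P q n s

/-! Differentiating the three-term recurrence at `s = 1`, where every `Pₙ` equals `1`, gives
`dₙ₊₂ = ((q+1)/q)(1 + dₙ₊₁) − dₙ/q` for `dₙ = P'ₙ(1)`. Its characteristic roots are `1` and
`1/q`, and the constant inhomogeneity at the root `1` produces the linear term; the closed form is
the solution with `d₀ = 0`, `d₁ = 1`. -/

theorem P_apply_one {q : ℝ} (hq : q ≠ 0) : ∀ n, P q n 1 = 1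
  | 0 => rfl
  | 1 => rfl
  | n + 2 => by
    simp only [P, P_apply_one hq n, P_apply_one hq (n + 1)]
    field_simp
    ring

theorem hasDerivAt_P_add_two {q a b x : ℝ} {n : ℕ} (ha : HasDerivAt (P q (n + 1)) a x)
    (hb : HasDerivAt (P q n) b x) :
    HasDerivAt (P q (n + 2)) ((q + 1) / q * (P q (n + 1) x + x * a) - 1 / q * b) x := by
  have h := (((hasDerivAt_id x).const_mul ((q + 1) / q)).mul ha).sub (hb.const_mul (1 / q))
  exact h.congr_deriv (by rw [id_eq]; ring)

theorem hasDerivAt_P_one {q : ℝ} (hq0 : q ≠ 0) (hq1 : q ≠ 1) (n : ℕ) :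
    HasDerivAt (P q n) (n * (q + 1) / (q - 1) - 2 * q * (1 - (q ^ n)⁻¹) / (q - 1) ^ 2) 1 := by
  have hq1' : q - 1 ≠ 0 := sub_ne_zero.mpr hq1
  induction n using Nat.twoStepInduction with
  | zero => exact (hasDerivAt_const (1 : ℝ) (1 : ℝ)).congr_deriv (by simp)
  | one =>
    refine (hasDerivAt_id (1 : ℝ)).congr_deriv ?_
    field_simp
    ring
  | more n ih₀ ih₁ =>
    convert hasDerivAt_P_add_two ih₁ ih₀ using 1
    rw [P_apply_one hq0]
    have hqn : q ^ n ≠ 0 := pow_ne_zero n hq0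
    push_cast
    field_simp
    ring

theorem deriv_P_at_one_general (q : ℕ) (hq3 : 3 ≤ q) (n : ℕ) :
    deriv (P (q : ℝ) n) 1 =
      (n : ℝ) * ((q : ℝ) + 1) / ((q : ℝ) - 1) -
        2 * (q : ℝ) * (1 - (q : ℝ) ^ (-(n : ℤ))) / ((q : ℝ) - 1) ^ 2 := by
  have hq : (3 : ℝ) ≤ q := by exact_mod_cast hq3
  rw [zpow_neg, zpow_natCast]
  exact (hasDerivAt_P_one (by positivity) (by linarith) n).deriv

theorem deriv_P_at_one (q : ℕ) (hq3 : 3 ≤ q) (hqodd : Odd q) (n : ℕ) :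
    deriv (P (q : ℝ) n) 1 =
      (n : ℝ) * ((q : ℝ) + 1) / ((q : ℝ) - 1) -
        2 * (q : ℝ) * (1 - (q : ℝ) ^ (-(n : ℤ))) / ((q : ℝ) - 1) ^ 2 :=
  deriv_P_at_one_general q hq3 n
end
end
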